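/- arXiv:2604.24556 — 7 statements merged into one kernel-verified Lean document; each statement's English description precedes it below -/
import Mathlib

section
/- Let G be a torsion abelian group and φ: G → G an endomorphism. Then φ is positively expansive if and only if φ is a factor of a unilateral Bernoulli shift; i.e., there exists a finite abelian group S and an epimorphism q: ⊕_{k∈ℕ} S → G with q ∘ σ = φ ∘ q, where σ is the unilateral shift. -/
/-- `S` is a positive generator for `φ`. -/
def IsPositiveGenerator {G : Type*} [AddCommGroup G] (φ : AddMonoid.End G)
    (S : AddSubgroup G) : Prop :=
  ∀ F : AddSubgroup G, (F : Set G).Finite →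
    ∃ n : ℕ, F ≤ ⨆ k ∈ Finset.range (n + 1), S.map (φ ^ k)

/-- `φ` is positively expansive: it has a finite positive generator. -/
def PositivelyExpansive {G : Type*} [AddCommGroup G] (φ : AddMonoid.End G) : Prop :=
  ∃ S : AddSubgroup G, (S : Set G).Finite ∧ IsPositiveGenerator φ S

/-!
A homomorphism `q : (ℕ →₀ S) →+ G` intertwining the shift with `φ` is determined by its
restriction `ψ` to the zeroth coordinate, `q (single k s) = φ^k (ψ s)`, so its range is
`⨆ k, φ^k (range ψ)`. Hence `φ` is a factor of the shift on `ℕ →₀ S` exactly when some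
finite `T = range ψ` satisfies `⨆ k, φ^k T = ⊤`. For torsion `G` this is equivalent to `T`
being a positive generator: a finite subgroup of a directed union of subgroups lies in one
of them, and every cyclic subgroup of `G` is finite.
-/

open Finsupp

theorem Finsupp.range_liftAddHom {α M N : Type*} [AddCommGroup M] [AddCommGroup N]
    (f : α → M →+ N) : (liftAddHom f).range = ⨆ a, (f a).range := by
  refine le_antisymm ?_ (iSup_le fun a => ?_)
  · rintro _ ⟨x, rfl⟩
    rw [liftAddHom_apply]
    exact AddSubgroup.sum_mem _ fun a _ => AddSubgroup.mem_iSup_of_mem a ⟨_, rfl⟩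
  · rintro _ ⟨b, rfl⟩
    exact ⟨single a b, liftAddHom_apply_single f a b⟩

theorem AddSubgroup.exists_le_of_finite_of_le_iSup {G ι : Type*} [AddGroup G] [Nonempty ι]
    {K : ι → AddSubgroup G} (hK : Directed (· ≤ ·) K) {F : AddSubgroup G}
    (hF : (F : Set G).Finite) (hFK : F ≤ ⨆ i, K i) : ∃ i, F ≤ K i := by
  have hsub : (hF.toFinset : Set G) ⊆ ⋃ i, (K i : Set G) := by
    rw [hF.coe_toFinset, ← AddSubgroup.coe_iSup_of_directed hK]
    exact hFK
  have hK' : Directed (· ⊆ ·) fun i => (K i : Set G) := hK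
  obtain ⟨i, hi⟩ := hK'.exists_mem_subset_of_finset_subset_biUnion hsub
  exact ⟨i, by rwa [hF.coe_toFinset] at hi⟩

theorem monotone_biSup_range_succ {α : Type*} [CompleteLattice α] (f : ℕ → α) :
    Monotone fun n => ⨆ k ∈ Finset.range (n + 1), f k :=
  fun _ _ hmn => biSup_mono fun _ hk => by simp only [Finset.mem_range] at hk ⊢; omega

theorem iSup_biSup_range_succ {α : Type*} [CompleteLattice α] (f : ℕ → α) :
    ⨆ n, ⨆ k ∈ Finset.range (n + 1), f k = ⨆ k, f k :=
  le_antisymm (iSup_le fun _ => iSup₂_le fun k _ => le_iSup f k)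
    (iSup_le fun k => le_iSup_of_le k (le_iSup₂_of_le k (by simp) le_rfl))

section PositiveGenerator

variable {G : Type*} [AddCommGroup G] {φ : AddMonoid.End G} {T : AddSubgroup G}

theorem IsPositiveGenerator.iSup_map_pow_eq_top (hG : IsAddTorsion G)
    (hT : IsPositiveGenerator φ T) : ⨆ k : ℕ, T.map (φ ^ k) = ⊤ := by
  refine eq_top_iff.2 fun g _ => ?_
  obtain ⟨n, hn⟩ := hT (AddSubgroup.zmultiples g) (hG g).finite_zmultiples
  exact iSup₂_le_iSup _ (fun k => T.map (φ ^ k)) (hn (AddSubgroup.mem_zmultiples g))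

theorem IsPositiveGenerator.of_iSup_map_pow_eq_top (hT : ⨆ k : ℕ, T.map (φ ^ k) = ⊤) :
    IsPositiveGenerator φ T := fun _ hF =>
  AddSubgroup.exists_le_of_finite_of_le_iSup (monotone_biSup_range_succ _).directed_le hF
    (by rw [iSup_biSup_range_succ, hT]; exact le_top)

end PositiveGenerator

namespace AddMonoid.End

variable {G S : Type*} [AddCommGroup G] [AddCommGroup S] (φ : AddMonoid.End G)

noncomputable def shiftLift (ψ : S →+ G) : (ℕ →₀ S) →+ G :=
  liftAddHom fun k => (φ ^ k : G →+ G).comp ψ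

theorem shiftLift_single (ψ : S →+ G) (k : ℕ) (s : S) :
    φ.shiftLift ψ (single k s) = (φ ^ k) (ψ s) :=
  liftAddHom_apply_single _ k s

theorem shiftLift_mapDomain_succ (ψ : S →+ G) (x : ℕ →₀ S) :
    φ.shiftLift ψ (mapDomain (· + 1) x) = φ (φ.shiftLift ψ x) := by
  induction x using Finsupp.induction with
  | zero => simp
  | single_add k s x _ _ ih =>
    rw [mapDomain_add, map_add, map_add, map_add, ih, mapDomain_single, shiftLift_single,
      shiftLift_single, pow_succ', coe_mul, Function.comp_apply]

theorem range_shiftLift (ψ : S →+ G) :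
    (φ.shiftLift ψ).range = ⨆ k : ℕ, ψ.range.map (φ ^ k) := by
  rw [shiftLift, range_liftAddHom]
  exact iSup_congr fun k => AddMonoidHom.range_comp (φ ^ k : G →+ G) ψ

theorem eq_shiftLift_of_intertwines (q : (ℕ →₀ S) →+ G)
    (hq : ∀ x, q (mapDomain (· + 1) x) = φ (q x)) :
    q = φ.shiftLift (q.comp (singleAddHom 0)) := by
  refine addHom_ext fun k s => ?_
  rw [shiftLift_single]
  induction k with
  | zero => rfl
  | succ k ih =>
    rw [← mapDomain_single (f := (· + 1)), hq, ih, pow_succ', coe_mul, Function.comp_apply]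

end AddMonoid.End

theorem stmt7 {G : Type*} [AddCommGroup G] (hG : AddMonoid.IsTorsion G)
    (φ : AddMonoid.End G) :
    PositivelyExpansive φ ↔
      ∃ (S : Type) (inst : AddCommGroup S),
        haveI := inst
        Finite S ∧
          ∃ q : (ℕ →₀ S) →+ G, Function.Surjective q ∧
            ∀ x : ℕ →₀ S, q (Finsupp.mapDomain (· + 1) x) = φ (q x) := by
  constructor
  · rintro ⟨T, hT, hgen⟩
    have := hT.to_subtype
    let ψ : Shrink.{0} T →+ G := T.subtype.comp Shrink.addEquiv.toAddMonoidHom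
    have hψ : ψ.range = T := by
      rw [AddMonoidHom.range_comp, AddMonoidHom.range_eq_top.2 Shrink.addEquiv.surjective,
        ← AddMonoidHom.range_eq_map, AddSubgroup.range_subtype]
    refine ⟨Shrink.{0} T, inferInstance, inferInstance, φ.shiftLift ψ, ?_,
      φ.shiftLift_mapDomain_succ ψ⟩
    rw [← AddMonoidHom.range_eq_top, φ.range_shiftLift, hψ, hgen.iSup_map_pow_eq_top hG]
  · rintro ⟨S, _, _, q, hq, hqφ⟩
    let ψ := q.comp (singleAddHom 0)
    refine ⟨ψ.range, Set.finite_range ψ, .of_iSup_map_pow_eq_top ?_⟩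
    rw [← φ.range_shiftLift, ← φ.eq_shiftLift_of_intertwines q hqφ,
      AddMonoidHom.range_eq_top.2 hq]
end

section
/- Let G be a torsion abelian group with G = H + K for subgroups H, K ≤ G, and let φ: G → G be an endomorphism with φ(H) ⊆ H and φ(K) ⊆ K. If the restrictions φ|_H and φ|_K are positively expansive, then φ is positively expansive. -/
section

variable {G : Type*} [AddCommGroup G]

theorem AddSubgroup.finite_closure_of_isAddTorsion (hG : IsAddTorsion G) {s : Set G}
    (hs : s.Finite) : ((AddSubgroup.closure s : AddSubgroup G) : Set G).Finite := by
  have := hs.to_subtype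
  exact Set.finite_coe_iff.mp <|
    AddCommGroup.finite_of_fg_isAddTorsion (AddSubgroup.closure s) (hG.addSubgroup _)

open Pointwise in
theorem AddSubgroup.finite_sup {H K : AddSubgroup G} (hH : (H : Set G).Finite)
    (hK : (K : Set G).Finite) : ((H ⊔ K : AddSubgroup G) : Set G).Finite := by
  rw [AddSubgroup.add_normal]
  exact hH.add hK

theorem AddSubgroup.exists_finite_le_map_subtype_sup_map_subtype (hG : IsAddTorsion G)
    {H K : AddSubgroup G} (hHK : H ⊔ K = ⊤) {F : AddSubgroup G} (hF : (F : Set G).Finite) :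
    ∃ (FH : AddSubgroup H) (FK : AddSubgroup K), (FH : Set H).Finite ∧ (FK : Set K).Finite ∧
      F ≤ FH.map H.subtype ⊔ FK.map K.subtype := by
  have := hF.to_subtype
  have hdecomp : ∀ g : F, ∃ h : H, ∃ k : K, (h : G) + k = g := fun g => by
    obtain ⟨h, hh, k, hk, hhk⟩ := AddSubgroup.mem_sup.mp (hHK ▸ AddSubgroup.mem_top (g : G))
    exact ⟨⟨h, hh⟩, ⟨k, hk⟩, hhk⟩
  choose h k hhk using hdecomp
  refine ⟨.closure (Set.range h), .closure (Set.range k),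
    finite_closure_of_isAddTorsion (hG.addSubgroup H) (Set.finite_range h),
    finite_closure_of_isAddTorsion (hG.addSubgroup K) (Set.finite_range k), fun g hg => ?_⟩
  rw [show g = h ⟨g, hg⟩ + k ⟨g, hg⟩ from (hhk ⟨g, hg⟩).symm]
  exact add_mem
    (mem_sup_left (mem_map_of_mem _ (subset_closure (Set.mem_range_self _))))
    (mem_sup_right (mem_map_of_mem _ (subset_closure (Set.mem_range_self _))))

section Restriction

variable {H : AddSubgroup G} {φ : AddMonoid.End G} {ψ : AddMonoid.End H}

theorem AddSubgroup.map_subtype_map_pow (hψ : ∀ x : H, (ψ x : G) = φ x) (S : AddSubgroup H)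
    (k : ℕ) : (S.map (ψ ^ k)).map H.subtype = (S.map H.subtype).map (φ ^ k) := by
  have hsemiconj : Function.Semiconj H.subtype ψ φ := hψ
  have hcomp : H.subtype.comp (ψ ^ k : H →+ H) = (φ ^ k : G →+ G).comp H.subtype :=
    AddMonoidHom.ext fun x => by
      change H.subtype ((ψ ^ k) x) = (φ ^ k) (H.subtype x)
      simpa only [AddMonoid.End.coe_pow] using hsemiconj.iterate_right k x
  rw [map_map (f := (ψ ^ k : H →+ H)), map_map (g := (φ ^ k : G →+ G)), hcomp]

theorem IsPositiveGenerator.exists_map_subtype_le {S : AddSubgroup H}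
    (hS : IsPositiveGenerator ψ S) (hψ : ∀ x : H, (ψ x : G) = φ x) {F : AddSubgroup H}
    (hF : (F : Set H).Finite) :
    ∃ n : ℕ, F.map H.subtype ≤ ⨆ k ∈ Finset.range (n + 1), (S.map H.subtype).map (φ ^ k) := by
  obtain ⟨n, hn⟩ := hS F hF
  refine ⟨n, (AddSubgroup.map_mono hn).trans_eq ?_⟩
  simp only [AddSubgroup.map_iSup, AddSubgroup.map_subtype_map_pow hψ]

end Restriction

theorem AddSubgroup.iSup_map_pow_mono (φ : AddMonoid.End G) {S T : AddSubgroup G} (hST : S ≤ T)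
    {m n : ℕ} (hmn : m ≤ n) :
    ⨆ k ∈ Finset.range (m + 1), S.map (φ ^ k) ≤ ⨆ k ∈ Finset.range (n + 1), T.map (φ ^ k) :=
  iSup₂_le fun k hk => (map_mono hST).trans <|
    le_iSup₂_of_le (f := fun k (_ : k ∈ Finset.range (n + 1)) => T.map (φ ^ k)) k
      (by simp only [Finset.mem_range] at hk ⊢; omega) le_rfl

end

theorem stmt9 {G : Type*} [AddCommGroup G] (hG : AddMonoid.IsTorsion G)
    (H K : AddSubgroup G) (hHK : H ⊔ K = ⊤)
    (φ : AddMonoid.End G)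
    (φH : AddMonoid.End H) (φK : AddMonoid.End K)
    (hφH : ∀ x : H, (φH x : G) = φ (x : G))
    (hφK : ∀ x : K, (φK x : G) = φ (x : G))
    (hH : PositivelyExpansive φH) (hK : PositivelyExpansive φK) :
    PositivelyExpansive φ := by
  obtain ⟨SH, hSH, hgenH⟩ := hH
  obtain ⟨SK, hSK, hgenK⟩ := hK
  refine ⟨SH.map H.subtype ⊔ SK.map K.subtype,
    AddSubgroup.finite_sup (hSH.image _) (hSK.image _), fun F hF => ?_⟩
  obtain ⟨FH, FK, hFH, hFK, hF_le⟩ :=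
    AddSubgroup.exists_finite_le_map_subtype_sup_map_subtype hG hHK hF
  obtain ⟨m, hm⟩ := hgenH.exists_map_subtype_le hφH hFH
  obtain ⟨n, hn⟩ := hgenK.exists_map_subtype_le hφK hFK
  refine ⟨max m n, hF_le.trans (sup_le ?_ ?_)⟩
  · exact hm.trans (AddSubgroup.iSup_map_pow_mono φ le_sup_left (le_max_left m n))
  · exact hn.trans (AddSubgroup.iSup_map_pow_mono φ le_sup_right (le_max_right m n))
end

section
/- Let φ: G → G be an endomorphism of an abelian group and n ≥ 1 a natural number. Then φ is positively expansive if and only if φ^n is positively expansive. -/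
/-!
Writing `k = n q + r` with `r < n` gives `φ^k S ≤ (φⁿ)^q T` for `T = S + φ S + ⋯ + φ^(n-1) S`,
which is finite when `S` is; so `T` is a positive generator for `φⁿ` whenever `S` is one for `φ`.
Conversely `∑_{q ≤ m} (φⁿ)^q S ≤ ∑_{k ≤ nm} φ^k S`, so a positive generator for `φⁿ` is one
for `φ`.
-/

open Finset

section

variable {G : Type*} [AddCommGroup G]

lemma AddSubgroup.finite_biSup {ι : Type*} (s : Finset ι) (f : ι → AddSubgroup G)
    (hf : ∀ i ∈ s, (f i : Set G).Finite) : ((⨆ i ∈ s, f i : AddSubgroup G) : Set G).Finite := by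
  classical
  induction s using Finset.induction with
  | empty => simp
  | insert a s _ ih =>
    rw [Finset.iSup_insert, AddSubgroup.add_normal]
    exact (hf a (mem_insert_self a s)).add (ih fun i hi => hf i (mem_insert_of_mem hi))

def orbitSum (φ : AddMonoid.End G) (S : AddSubgroup G) (m : ℕ) : AddSubgroup G :=
  ⨆ k ∈ range (m + 1), S.map (φ ^ k)

lemma orbitSum_pow_le (φ : AddMonoid.End G) (S : AddSubgroup G) (n m : ℕ) :
    orbitSum (φ ^ n) S m ≤ orbitSum φ S (n * m) := by
  refine iSup₂_le fun k hk => le_iSup₂_of_le (n * k) ?_ (by rw [pow_mul])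
  rw [mem_range] at hk ⊢
  exact Nat.lt_succ_of_le (Nat.mul_le_mul_left n (Nat.lt_succ_iff.mp hk))

lemma orbitSum_le_orbitSum_pow (φ : AddMonoid.End G) (S : AddSubgroup G) {n : ℕ} (hn : 0 < n)
    (m : ℕ) : orbitSum φ S m ≤ orbitSum (φ ^ n) (⨆ j ∈ range n, S.map (φ ^ j)) m := by
  refine iSup₂_le fun k hk => le_iSup₂_of_le (k / n) ?_ ?_
  · rw [mem_range] at hk ⊢
    exact (Nat.div_le_self k n).trans_lt hk
  · have hsplit : φ ^ k = (φ ^ n) ^ (k / n) * φ ^ (k % n) := by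
      rw [← pow_mul, ← pow_add, Nat.div_add_mod]
    rw [hsplit]
    exact (AddSubgroup.map_map _ _ _).symm.trans_le <| AddSubgroup.map_mono <|
      le_iSup₂_of_le (k % n) (mem_range.mpr (Nat.mod_lt k hn)) le_rfl

namespace IsPositiveGenerator

variable {φ : AddMonoid.End G} {S : AddSubgroup G}

lemma of_pow {n : ℕ} (h : IsPositiveGenerator (φ ^ n) S) : IsPositiveGenerator φ S :=
  fun F hF =>
    let ⟨m, hm⟩ := h F hF
    ⟨n * m, hm.trans (orbitSum_pow_le φ S n m)⟩

lemma pow (h : IsPositiveGenerator φ S) {n : ℕ} (hn : 0 < n) :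
    IsPositiveGenerator (φ ^ n) (⨆ j ∈ range n, S.map (φ ^ j)) :=
  fun F hF => (h F hF).imp fun m hm => hm.trans (orbitSum_le_orbitSum_pow φ S hn m)

end IsPositiveGenerator

namespace PositivelyExpansive

variable {φ : AddMonoid.End G}

lemma of_pow {n : ℕ} (h : PositivelyExpansive (φ ^ n)) : PositivelyExpansive φ :=
  let ⟨S, hS, hgen⟩ := h
  ⟨S, hS, hgen.of_pow⟩

lemma pow (h : PositivelyExpansive φ) {n : ℕ} (hn : 0 < n) : PositivelyExpansive (φ ^ n) :=
  let ⟨_, hS, hgen⟩ := h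
  ⟨_, AddSubgroup.finite_biSup _ _ fun _ _ => hS.image _, hgen.pow hn⟩

end PositivelyExpansive

end

theorem stmt11 {G : Type*} [AddCommGroup G] (φ : AddMonoid.End G) (n : ℕ) (hn : 1 ≤ n) :
    PositivelyExpansive φ ↔ PositivelyExpansive (φ ^ n) :=
  ⟨fun h => h.pow hn, PositivelyExpansive.of_pow⟩
end

section
/- Let φ: G → G be an endomorphism of an abelian group and let S ≤ G be a positive generator for φ. Then the algebraic entropy of φ satisfies h(φ) = h(φ, S), where h(φ) = sup over finite subgroups F ≤ G of h(φ, F). In particular, every positively expansive endomorphism has finite algebraic entropy. -/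
/-- The `n`-th trajectory subgroup `∑_{k=0}^{n-1} φ^k(F)`. -/
noncomputable def trajectory {G : Type*} [AddCommGroup G] (φ : AddMonoid.End G)
    (F : AddSubgroup G) (n : ℕ) : AddSubgroup G :=
  ⨆ k ∈ Finset.range n, F.map (φ ^ k)

/-- Algebraic entropy of `φ` relative to `F`:
`limsup_n (1/n) log |∑_{k=0}^{n-1} φ^k(F)|`. -/
noncomputable def entropyRel {G : Type*} [AddCommGroup G] (φ : AddMonoid.End G)
    (F : AddSubgroup G) : ℝ :=
  Filter.limsup (fun n : ℕ => Real.log (Nat.card (trajectory φ F n)) / n) Filter.atTop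

/-- The algebraic entropy of `φ`: supremum of relative entropies over finite subgroups. -/
noncomputable def entropy {G : Type*} [AddCommGroup G] (φ : AddMonoid.End G) : ℝ :=
  ⨆ F : {F : AddSubgroup G // (F : Set G).Finite}, entropyRel φ F.1

/-! A finite subgroup `F` lies in some `trajectory φ S (m + 1)`, hence `trajectory φ F n` lies in
`trajectory φ S (n + m)`, which has at most `|trajectory φ S n| * |S| ^ m` elements. The constant
factor `|S| ^ m` is killed by `log (·) / n` in the limit, so `entropyRel φ F ≤ entropyRel φ S`. -/

open Filter Topology Pointwise

lemma limsup_le_limsup_of_le_add_tendsto_zero {ι : Type*} {l : Filter ι} [l.NeBot]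
    {u v w : ι → ℝ} (hu : IsBoundedUnder (· ≥ ·) l u) (hv : IsBoundedUnder (· ≤ ·) l v)
    (hv' : IsBoundedUnder (· ≥ ·) l v) (hw : Tendsto w l (𝓝 0)) (h : u ≤ᶠ[l] v + w) :
    limsup u l ≤ limsup v l :=
  calc limsup u l
      ≤ limsup (v + w) l :=
        limsup_le_limsup h hu.isCoboundedUnder_le (isBoundedUnder_le_add hv hw.isBoundedUnder_le)
    _ ≤ limsup v l + limsup w l :=
        limsup_add_le hv' hv hw.isBoundedUnder_ge.isCoboundedUnder_le hw.isBoundedUnder_le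
    _ = limsup v l := by rw [hw.limsup_eq, add_zero]

lemma Real.log_natCast_le_add_of_le_mul {a b c : ℕ} (h : a ≤ b * c) :
    Real.log a ≤ Real.log b + Real.log c := by
  rcases Nat.eq_zero_or_pos a with rfl | ha
  · simpa using add_nonneg (Real.log_natCast_nonneg b) (Real.log_natCast_nonneg c)
  have hb : (b : ℝ) ≠ 0 := by exact_mod_cast (Nat.pos_of_mul_pos_right (ha.trans_le h)).ne'
  have hc : (c : ℝ) ≠ 0 := by exact_mod_cast (Nat.pos_of_mul_pos_left (ha.trans_le h)).ne'
  rw [← Real.log_mul hb hc]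
  exact Real.log_le_log (by exact_mod_cast ha) (by exact_mod_cast h)

namespace AddSubgroup

variable {G : Type*} [AddCommGroup G]

lemma card_sup_le (A B : AddSubgroup G) : Nat.card ↥(A ⊔ B) ≤ Nat.card A * Nat.card B := by
  have h : ((A ⊔ B : AddSubgroup G) : Set G) = (A : Set G) + (B : Set G) := add_normal A B
  change Nat.card ((A ⊔ B : AddSubgroup G) : Set G) ≤ _
  rw [h]
  exact Set.natCard_add_le

lemma card_map_le {H : Type*} [AddGroup H] {A : AddSubgroup G} (hA : (A : Set G).Finite)
    (f : G →+ H) :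
    Nat.card (A.map f) ≤ Nat.card A := by
  change Nat.card ((A.map f : AddSubgroup H) : Set H) ≤ _
  rw [coe_map]
  exact Nat.card_image_le hA

end AddSubgroup

section Trajectory

variable {G : Type*} [AddCommGroup G] (φ : AddMonoid.End G)

lemma trajectory_zero (F : AddSubgroup G) : trajectory φ F 0 = ⊥ := by
  simp [trajectory]

lemma trajectory_succ (F : AddSubgroup G) (n : ℕ) :
    trajectory φ F (n + 1) = trajectory φ F n ⊔ F.map (φ ^ n) := by
  rw [trajectory, trajectory, Finset.range_add_one, Finset.iSup_insert, sup_comm]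

lemma map_le_trajectory (F : AddSubgroup G) {k n : ℕ} (h : k < n) :
    F.map (φ ^ k) ≤ trajectory φ F n :=
  le_iSup₂ (f := fun k _ => F.map (φ ^ k)) k (Finset.mem_range.2 h)

lemma trajectory_mono (F : AddSubgroup G) : Monotone (trajectory φ F) :=
  fun _ _ hmn => iSup₂_le fun _ hk =>
    map_le_trajectory φ F ((Finset.mem_range.1 hk).trans_le hmn)

lemma map_pow_map_pow (F : AddSubgroup G) (j k : ℕ) :
    (F.map (φ ^ j)).map (φ ^ k) = F.map (φ ^ (k + j)) := by
  rw [pow_add]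
  exact F.map_map (φ ^ k) (φ ^ j)

lemma map_trajectory_le (F : AddSubgroup G) (a k : ℕ) :
    (trajectory φ F a).map (φ ^ k) ≤ trajectory φ F (a + k) :=
  AddSubgroup.map_le_iff_le_comap.2 <| iSup₂_le fun j hj => AddSubgroup.map_le_iff_le_comap.1 <| by
    rw [map_pow_map_pow]
    exact map_le_trajectory φ F (by simp at hj; omega)

lemma trajectory_le_trajectory_add {F S : AddSubgroup G} {m : ℕ}
    (hm : F ≤ trajectory φ S (m + 1)) (n : ℕ) :
    trajectory φ F n ≤ trajectory φ S (n + m) :=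
  iSup₂_le fun k hk =>
    calc F.map (φ ^ k) ≤ (trajectory φ S (m + 1)).map (φ ^ k) := AddSubgroup.map_mono hm
      _ ≤ trajectory φ S (m + 1 + k) := map_trajectory_le φ S _ _
      _ ≤ trajectory φ S (n + m) := trajectory_mono φ S (by simp at hk; omega)

lemma finite_trajectory {F : AddSubgroup G} (hF : (F : Set G).Finite) (n : ℕ) :
    ((trajectory φ F n : AddSubgroup G) : Set G).Finite := by
  induction n with
  | zero => simp [trajectory_zero]
  | succ n ih =>
    rw [trajectory_succ, AddSubgroup.add_normal]
    exact ih.add (hF.image _)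

lemma card_trajectory_add_le {S : AddSubgroup G} (hS : (S : Set G).Finite) (n m : ℕ) :
    Nat.card (trajectory φ S (n + m)) ≤ Nat.card (trajectory φ S n) * Nat.card S ^ m := by
  induction m with
  | zero => simp
  | succ m ih =>
    calc Nat.card (trajectory φ S (n + m + 1))
        ≤ Nat.card (trajectory φ S (n + m)) * Nat.card S := by
          rw [trajectory_succ]
          exact (AddSubgroup.card_sup_le _ _).trans
            (Nat.mul_le_mul_left _ (AddSubgroup.card_map_le hS _))
      _ ≤ Nat.card (trajectory φ S n) * Nat.card S ^ (m + 1) := by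
          rw [pow_succ, ← mul_assoc]
          exact Nat.mul_le_mul_right _ ih

lemma card_trajectory_le_of_le_trajectory {F S : AddSubgroup G} (hS : (S : Set G).Finite)
    {m : ℕ} (hm : F ≤ trajectory φ S (m + 1)) (n : ℕ) :
    Nat.card (trajectory φ F n) ≤ Nat.card (trajectory φ S n) * Nat.card S ^ m := by
  have : Finite (trajectory φ S (n + m)) := (finite_trajectory φ hS (n + m)).to_subtype
  exact (AddSubgroup.card_le_of_le (trajectory_le_trajectory_add φ hm n)).trans
    (card_trajectory_add_le φ hS n m)

lemma log_card_trajectory_div_le {S : AddSubgroup G} (hS : (S : Set G).Finite) (n : ℕ) :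
    Real.log (Nat.card (trajectory φ S n)) / n ≤ Real.log (Nat.card S) := by
  have h := Real.log_natCast_le_add_of_le_mul (card_trajectory_add_le φ hS 0 n)
  rw [zero_add, trajectory_zero, AddSubgroup.card_bot, Nat.cast_one, Real.log_one, zero_add,
    Nat.cast_pow, Real.log_pow] at h
  exact div_le_of_le_mul₀ n.cast_nonneg (Real.log_natCast_nonneg _) (by linarith)

lemma entropyRel_le_of_card_trajectory_le {F S : AddSubgroup G} (hS : (S : Set G).Finite)
    (C : ℕ) (hC : ∀ n, Nat.card (trajectory φ F n) ≤ Nat.card (trajectory φ S n) * C) :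
    entropyRel φ F ≤ entropyRel φ S := by
  have hnonneg (A : AddSubgroup G) (n : ℕ) : 0 ≤ Real.log (Nat.card (trajectory φ A n)) / n :=
    div_nonneg (Real.log_natCast_nonneg _) n.cast_nonneg
  refine limsup_le_limsup_of_le_add_tendsto_zero (isBoundedUnder_of ⟨0, hnonneg F⟩)
    (isBoundedUnder_of ⟨_, log_card_trajectory_div_le φ hS⟩) (isBoundedUnder_of ⟨0, hnonneg S⟩)
    (tendsto_const_div_atTop_nhds_zero_nat (Real.log C)) (Eventually.of_forall fun n => ?_)
  rw [Pi.add_apply, ← add_div]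
  exact div_le_div_of_nonneg_right (Real.log_natCast_le_add_of_le_mul (hC n)) n.cast_nonneg

lemma entropyRel_le_of_isPositiveGenerator {S : AddSubgroup G} (hS : (S : Set G).Finite)
    (hgen : IsPositiveGenerator φ S) {F : AddSubgroup G} (hF : (F : Set G).Finite) :
    entropyRel φ F ≤ entropyRel φ S :=
  let ⟨_, hm⟩ := hgen F hF
  entropyRel_le_of_card_trajectory_le φ hS _ (card_trajectory_le_of_le_trajectory φ hS hm)

end Trajectory

theorem stmt15 {G : Type*} [AddCommGroup G] (φ : AddMonoid.End G) (S : AddSubgroup G)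
    (hS : (S : Set G).Finite) (hgen : IsPositiveGenerator φ S) :
    entropy φ = entropyRel φ S :=
  IsGreatest.csSup_eq ⟨⟨⟨S, hS⟩, rfl⟩, by
    rintro _ ⟨F, rfl⟩
    exact entropyRel_le_of_isPositiveGenerator φ hS hgen F.2⟩
end

section
/- Let φ be a positively expansive surjective endomorphism of a torsion abelian group G. Then there exists a finite subgroup K ≤ G such that for every finite subgroup F ≤ G there exists m ∈ ℕ with F ⊆ φ^m(K). -/
open AddSubgroup

theorem IsAddTorsion.finite_closure {G : Type*} [AddCommGroup G] (hG : IsAddTorsion G)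
    {s : Set G} (hs : s.Finite) : ((closure s : AddSubgroup G) : Set G).Finite := by
  have : Finite s := hs.to_subtype
  have : Finite (closure s) := AddCommGroup.finite_of_fg_isAddTorsion _ (hG.addSubgroup _)
  exact Set.toFinite _

theorem IsAddTorsion.exists_finite_le_map {G H : Type*} [AddCommGroup G] [AddGroup H]
    (hG : IsAddTorsion G) {f : G →+ H} (hf : Function.Surjective f) {S : AddSubgroup H}
    (hS : (S : Set H).Finite) : ∃ S' : AddSubgroup G, (S' : Set G).Finite ∧ S ≤ S'.map f := by
  choose σ hσ using hf
  exact ⟨closure (σ '' S), hG.finite_closure (hS.image σ),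
    fun x hx => ⟨σ x, subset_closure ⟨x, hx, rfl⟩, hσ x⟩⟩

namespace AddSubgroup

variable {G : Type*} [AddCommGroup G]

theorem map_one_end (S : AddSubgroup G) : S.map (1 : AddMonoid.End G) = S :=
  map_id S

theorem map_mul_end (f g : AddMonoid.End G) (S : AddSubgroup G) :
    S.map (f * g) = (S.map g).map f :=
  (map_map S f g).symm

variable (φ : AddMonoid.End G)

def sumMapPow (S : AddSubgroup G) (n : ℕ) : AddSubgroup G :=
  ⨆ k ∈ Finset.range (n + 1), S.map (φ ^ k)

variable {φ} {S K : AddSubgroup G} {n : ℕ}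

theorem map_pow_le_sumMapPow {k : ℕ} (hk : k ≤ n) : S.map (φ ^ k) ≤ sumMapPow φ S n :=
  le_iSup₂_of_le k (Finset.mem_range_succ_iff.2 hk) le_rfl

theorem sumMapPow_le_iff : sumMapPow φ S n ≤ K ↔ ∀ k ≤ n, S.map (φ ^ k) ≤ K := by
  simp only [sumMapPow, iSup₂_le_iff, Finset.mem_range_succ_iff]

theorem le_sumMapPow : S ≤ sumMapPow φ S n := by
  simpa only [pow_zero, map_one_end] using map_pow_le_sumMapPow (φ := φ) (S := S) n.zero_le

theorem sumMapPow_finite (hG : IsAddTorsion G) (hS : (S : Set G).Finite) (n : ℕ) :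
    (sumMapPow φ S n : Set G).Finite := by
  refine (hG.finite_closure (Set.Finite.biUnion (Finset.range (n + 1)).finite_toSet
    fun k _ => hS.image (φ ^ k))).subset ?_
  refine sumMapPow_le_iff.2 fun k hk x hx => subset_closure ?_
  exact Set.mem_biUnion (Finset.mem_range_succ_iff.2 hk) hx

theorem sumMapPow_le_map (h : S ≤ (sumMapPow φ S n).map φ) :
    sumMapPow φ S n ≤ (sumMapPow φ S n).map φ := by
  refine sumMapPow_le_iff.2 fun k hk => ?_
  cases k with
  | zero => simpa only [pow_zero, map_one_end] using h
  | succ k =>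
    rw [pow_succ', map_mul_end]
    exact map_mono (map_pow_le_sumMapPow (by omega))

theorem monotone_map_pow (hK : K ≤ K.map φ) : Monotone fun m => K.map (φ ^ m) :=
  monotone_nat_of_le_succ fun m => calc
    K.map (φ ^ m) ≤ (K.map φ).map (φ ^ m) := map_mono hK
    _ = K.map (φ ^ (m + 1)) := by rw [pow_succ, map_mul_end]

theorem sumMapPow_le_map_pow (hS : S ≤ K) (hK : K ≤ K.map φ) (n : ℕ) :
    sumMapPow φ S n ≤ K.map (φ ^ n) :=
  sumMapPow_le_iff.2 fun _ hk => (map_mono hS).trans (monotone_map_pow hK hk)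

end AddSubgroup

theorem stmt16 {G : Type*} [AddCommGroup G] (hG : AddMonoid.IsTorsion G)
    (φ : AddMonoid.End G) (hsurj : Function.Surjective φ)
    (hexp : PositivelyExpansive φ) :
    ∃ K : AddSubgroup G, (K : Set G).Finite ∧
      ∀ F : AddSubgroup G, (F : Set G).Finite →
        ∃ m : ℕ, F ≤ K.map (φ ^ m) := by
  obtain ⟨S, hSfin, hgen⟩ := hexp
  obtain ⟨S', hS'fin, hSS'⟩ := hG.exists_finite_le_map hsurj hSfin
  obtain ⟨n, hS'n⟩ := hgen S' hS'fin
  have hK : sumMapPow φ S n ≤ (sumMapPow φ S n).map φ :=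
    sumMapPow_le_map (hSS'.trans (map_mono hS'n))
  refine ⟨sumMapPow φ S n, sumMapPow_finite hG hSfin n, fun F hF => ?_⟩
  obtain ⟨m, hFm⟩ := hgen F hF
  exact ⟨m, hFm.trans (sumMapPow_le_map_pow le_sumMapPow hK m)⟩
end

section
/- Let G = ⊕_{n∈ℤ} G_n where G_n = ℤ for n < 0 and G_n = ℤ/2ℤ for n ≥ 0, and let φ: G → G be the shift-like map sending (g_n)_{n∈ℤ} to the sequence whose n-th coordinate is g_{n-1} for n ≠ 0 and π(g_{-1}) at coordinate 0, where π: ℤ → ℤ/2ℤ is the canonical projection. Then φ is a surjective endomorphism that is positively expansive (with positive generator the subgroup of sequences supported in coordinate 0), and G is infinite. -/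
open Finsupp

lemma AddSubgroup.fst_eq_zero_of_mem_of_finite {A B : Type*} [AddGroup A] [IsAddTorsionFree A]
    [AddGroup B] {F : AddSubgroup (A × B)} (hF : (F : Set (A × B)).Finite) {g : A × B}
    (hg : g ∈ F) : g.1 = 0 :=
  have : Finite F := hF.to_subtype
  (AddSubmonoid.isOfFinAddOrder_coe.2 (isOfFinAddOrder_of_finite (⟨g, hg⟩ : F))).fst.eq_zero'

local notation "𝔾" => (ℕ →₀ ℤ) × (ℕ →₀ ZMod 2)

noncomputable def supportedAtZero : AddSubgroup 𝔾 :=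
  (⊥ : AddSubgroup (ℕ →₀ ℤ)).prod (singleAddHom 0 : ZMod 2 →+ (ℕ →₀ ZMod 2)).range

lemma supportedAtZero_finite : (supportedAtZero : Set 𝔾).Finite := by
  rw [supportedAtZero, AddSubgroup.coe_prod, AddSubgroup.coe_bot, AddMonoidHom.coe_range]
  exact (Set.finite_singleton 0).prod (Set.finite_range _)

/-- `g.1 j` is the coordinate `g_{-(j+1)}` and `g.2 i` the coordinate `g_i` of the paper. -/
structure IsShiftMap (φ : AddMonoid.End 𝔾) : Prop where
  fst_apply : ∀ g j, (φ g).1 j = g.1 (j + 1)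
  snd_apply_zero : ∀ g, (φ g).2 0 = ((g.1 0 : ℤ) : ZMod 2)
  snd_apply_succ : ∀ g i, (φ g).2 (i + 1) = g.2 i

namespace IsShiftMap

variable {φ : AddMonoid.End 𝔾} (hφ : IsShiftMap φ)
include hφ

lemma apply_eq_iff {g h : 𝔾} :
    φ g = h ↔ (∀ j, h.1 j = g.1 (j + 1)) ∧ h.2 0 = ((g.1 0 : ℤ) : ZMod 2) ∧
      ∀ i, h.2 (i + 1) = g.2 i := by
  constructor
  · rintro rfl
    exact ⟨hφ.fst_apply g, hφ.snd_apply_zero g, hφ.snd_apply_succ g⟩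
  · rintro ⟨h₁, h₂, h₃⟩
    refine Prod.ext (Finsupp.ext fun j => ?_) (Finsupp.ext fun i => ?_)
    · rw [hφ.fst_apply, h₁]
    · cases i with
      | zero => rw [hφ.snd_apply_zero, h₂]
      | succ i => rw [hφ.snd_apply_succ, h₃]

lemma apply_single_fst (j : ℕ) (n : ℤ) : φ (single (j + 1) n, 0) = (single j n, 0) :=
  hφ.apply_eq_iff.2 ⟨fun _ => by simp [single_apply], by simp, by simp⟩

lemma apply_single_zero (a : ZMod 2) : φ (single 0 (a.val : ℤ), 0) = (0, single 0 a) :=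
  hφ.apply_eq_iff.2 ⟨by simp, by simp, by simp⟩

lemma apply_single_snd (i : ℕ) (a : ZMod 2) : φ (0, single i a) = (0, single (i + 1) a) :=
  hφ.apply_eq_iff.2 ⟨by simp, by simp, fun _ => by simp [single_apply]⟩

lemma pow_apply_single (k : ℕ) (a : ZMod 2) : (φ ^ k) (0, single 0 a) = (0, single k a) := by
  induction k with
  | zero => rfl
  | succ k ih => rw [AddMonoid.End.coe_pow, Function.iterate_succ_apply', ← AddMonoid.End.coe_pow,
      ih, hφ.apply_single_snd]

lemma mk_zero_mem_range (f : ℕ →₀ ℤ) : (f, 0) ∈ φ.range := by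
  induction f using Finsupp.induction with
  | zero => exact zero_mem _
  | single_add j n f _ _ ih =>
    simpa using add_mem (AddMonoidHom.mem_range.2 ⟨_, hφ.apply_single_fst j n⟩) ih

lemma zero_mk_mem_range (f : ℕ →₀ ZMod 2) : (0, f) ∈ φ.range := by
  induction f using Finsupp.induction with
  | zero => exact zero_mem _
  | single_add j a f _ _ ih =>
    have hsingle : ((0 : ℕ →₀ ℤ), single j a) ∈ φ.range := by
      cases j with
      | zero => exact AddMonoidHom.mem_range.2 ⟨_, hφ.apply_single_zero a⟩
      | succ i => exact AddMonoidHom.mem_range.2 ⟨_, hφ.apply_single_snd i a⟩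
    simpa using add_mem hsingle ih

lemma surjective : Function.Surjective φ := fun g => AddMonoidHom.mem_range.1 <| by
  simpa using add_mem (hφ.mk_zero_mem_range g.1) (hφ.zero_mk_mem_range g.2)

lemma zero_mk_mem_iSup_map_pow (f : ℕ →₀ ZMod 2) {n : ℕ} (hf : ∀ k ∈ f.support, k ≤ n) :
    ((0 : ℕ →₀ ℤ), f) ∈ ⨆ k ∈ Finset.range (n + 1), supportedAtZero.map (φ ^ k) := by
  have hsum : ((0 : ℕ →₀ ℤ), f) = f.sum fun k a => ((0 : ℕ →₀ ℤ), single k a) := by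
    simpa using map_finsuppSum (AddMonoidHom.inr (ℕ →₀ ℤ) (ℕ →₀ ZMod 2)) f single
  rw [hsum]
  refine AddSubmonoidClass.finsuppSum_mem _ _ _ fun k hk => ?_
  refine AddSubgroup.mem_iSup_of_mem k (AddSubgroup.mem_iSup_of_mem
    (Finset.mem_range_succ_iff.2 (hf k (mem_support_iff.2 hk))) ?_)
  exact ⟨(0, single 0 (f k)), ⟨rfl, f k, rfl⟩, hφ.pow_apply_single k (f k)⟩

lemma isPositiveGenerator : IsPositiveGenerator φ supportedAtZero := by
  intro F hF
  refine ⟨hF.toFinset.sup fun g => g.2.support.sup id, fun g hg => ?_⟩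
  have hg₁ : g = (0, g.2) := Prod.ext (AddSubgroup.fst_eq_zero_of_mem_of_finite hF hg) rfl
  rw [hg₁]
  exact hφ.zero_mk_mem_iSup_map_pow g.2 fun k hk =>
    (Finset.le_sup (f := id) hk).trans
      (Finset.le_sup (f := fun g : 𝔾 => g.2.support.sup id) (hF.mem_toFinset.2 hg))

end IsShiftMap

theorem stmt18
    (φ : AddMonoid.End ((ℕ →₀ ℤ) × (ℕ →₀ ZMod 2)))
    (hφ1 : ∀ g : (ℕ →₀ ℤ) × (ℕ →₀ ZMod 2), ∀ j : ℕ, (φ g).1 j = g.1 (j + 1))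
    (hφ2 : ∀ g : (ℕ →₀ ℤ) × (ℕ →₀ ZMod 2), (φ g).2 0 = ((g.1 0 : ℤ) : ZMod 2))
    (hφ3 : ∀ g : (ℕ →₀ ℤ) × (ℕ →₀ ZMod 2), ∀ i : ℕ, (φ g).2 (i + 1) = g.2 i) :
    Function.Surjective φ ∧
      (((AddSubgroup.prod (⊥ : AddSubgroup (ℕ →₀ ℤ))
            (Finsupp.singleAddHom 0 : ZMod 2 →+ (ℕ →₀ ZMod 2)).range :
              AddSubgroup ((ℕ →₀ ℤ) × (ℕ →₀ ZMod 2))) :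
          Set ((ℕ →₀ ℤ) × (ℕ →₀ ZMod 2))).Finite ∧
        IsPositiveGenerator φ
          (AddSubgroup.prod ⊥ (Finsupp.singleAddHom 0 : ZMod 2 →+ (ℕ →₀ ZMod 2)).range)) ∧
      Infinite ((ℕ →₀ ℤ) × (ℕ →₀ ZMod 2)) := by
  have hφ : IsShiftMap φ := ⟨hφ1, hφ2, hφ3⟩
  exact ⟨hφ.surjective, ⟨supportedAtZero_finite, hφ.isPositiveGenerator⟩, inferInstance⟩
end

section
/- Let G be a discrete torsion abelian group and φ: G → G an endomorphism, with Pontryagin dual endomorphism φ̂ of the compact group Ĝ. Then φ is algebraically positively expansive (there is a finite subgroup S ≤ G with ∑_{n∈ℕ} φ^n(S) = G) if and only if φ̂ is topologically positively expansive (there is a neighborhood U of the identity e in Ĝ with ⋂_{n∈ℕ} φ̂^{-n}(U) = {e}). -/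
/-!
Write `S^⊥` for the characters trivial on `S`. As `ψ` is dual to `φ`, `⋂ n, ψ^[n] ⁻¹' S^⊥` is the
annihilator of `⨆ n, φⁿ(S)`, and a subgroup of `G` is everything iff its annihilator is trivial:
characters into `ℚ/ℤ ⊆ ℝ/ℤ` separate a subgroup from any point outside it, `ℚ/ℤ` being injective.
It remains to match finite subgroups with neighbourhoods of `1`. For finite `S`, `S^⊥` is open,
since each `χ g` with `g ∈ S` is a root of unity of order dividing `addOrderOf g` and roots of
unity of bounded order are isolated in the circle. Conversely, `G` being discrete, the dual carries
the topology of pointwise convergence, so every neighbourhood of `1` contains `F^⊥` for a finite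
`F`, and `F` generates a finite subgroup because `G` is torsion.
-/

open Multiplicative Set Filter Topology

namespace AddCircle

noncomputable def ratToReal : AddCircle (1 : ℚ) →+ AddCircle (1 : ℝ) :=
  QuotientAddGroup.map _ _ (Rat.castHom ℝ).toAddMonoidHom <| by
    rintro _ ⟨n, rfl⟩
    exact ⟨n, by simp⟩

theorem ratToReal_coe (q : ℚ) : ratToReal q = ((q : ℝ) : AddCircle (1 : ℝ)) := rfl

theorem ratToReal_injective : Function.Injective ratToReal := by
  refine (injective_iff_map_eq_zero _).2 fun x hx => ?_
  obtain ⟨q, rfl⟩ := QuotientAddGroup.mk_surjective x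
  obtain ⟨n, hn⟩ := (coe_eq_zero_iff _).1 (ratToReal_coe q ▸ hx)
  have hnq : (n : ℝ) = q := by simpa using hn
  exact (coe_eq_zero_iff _).2 ⟨n, by rw [zsmul_one]; exact_mod_cast hnq⟩

end AddCircle

namespace Circle

theorem finite_setOf_pow_eq_one {n : ℕ} (hn : n ≠ 0) : {z : Circle | z ^ n = 1}.Finite := by
  refine ((Polynomial.nthRootsFinset n (1 : ℂ)).finite_toSet.preimage
    (f := ((↑) : Circle → ℂ)) coe_injective.injOn).subset fun z hz => ?_
  rw [mem_preimage, Finset.mem_coe, Polynomial.mem_nthRootsFinset (Nat.pos_of_ne_zero hn),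
    ← coe_one]
  exact congr_arg ((↑) : Circle → ℂ) (hz : z ^ n = 1)

theorem eventually_eq_one_of_pow_eq_one {n : ℕ} (hn : n ≠ 0) :
    ∀ᶠ z in 𝓝 (1 : Circle), z ^ n = 1 → z = 1 := by
  filter_upwards [((finite_setOf_pow_eq_one hn).sdiff (t := {1})).isClosed.isOpen_compl.mem_nhds
    (by simp)] with z hz hzn
  by_contra h
  exact hz ⟨hzn, h⟩

end Circle

theorem IsAddTorsion.finite_closure_s19 {G : Type*} [AddCommGroup G] (hG : IsAddTorsion G)
    {F : Set G} (hF : F.Finite) : (AddSubgroup.closure F : Set G).Finite := by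
  have := hF.to_subtype
  have := AddCommGroup.finite_of_fg_isAddTorsion _ (hG.addSubgroup (AddSubgroup.closure F))
  exact Set.toFinite _

namespace PontryaginDual

variable {G : Type*} [AddCommGroup G] [TopologicalSpace G]

theorem isInducing_coeFn [DiscreteTopology G] :
    IsInducing ((⇑) : PontryaginDual (Multiplicative G) → Multiplicative G → Circle) :=
  ContinuousMap.isHomeomorph_coe.isInducing.comp
    (ContinuousMonoidHom.isInducing_toContinuousMap _ _)

noncomputable def ofAddCircle [DiscreteTopology G] (f : G →+ AddCircle (1 : ℝ)) :
    PontryaginDual (Multiplicative G) :=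
  ⟨(AddCircle.toCircle_addChar.compAddMonoidHom f).toMonoidHom, continuous_of_discreteTopology⟩

theorem ofAddCircle_apply_eq_one_iff [DiscreteTopology G] (f : G →+ AddCircle (1 : ℝ)) (g : G) :
    ofAddCircle f (ofAdd g) = 1 ↔ f g = 0 := by
  rw [← (AddCircle.injective_toCircle one_ne_zero).eq_iff, AddCircle.toCircle_zero]
  rfl

def annihilator (F : Set G) : Set (PontryaginDual (Multiplicative G)) :=
  {χ | ∀ g ∈ F, χ (ofAdd g) = 1}

theorem one_mem_annihilator (F : Set G) : 1 ∈ annihilator F := fun _ _ => rfl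

theorem annihilator_iUnion {ι : Type*} (F : ι → Set G) :
    annihilator (⋃ i, F i) = ⋂ i, annihilator (F i) := by
  ext χ
  simp only [annihilator, mem_iUnion, mem_iInter, mem_ofPred_eq]
  grind

theorem annihilator_closure (F : Set G) :
    annihilator (AddSubgroup.closure F : Set G) = annihilator F := by
  refine Subset.antisymm (fun χ hχ g hg => hχ g (AddSubgroup.subset_closure hg))
    fun χ hχ g hg => ?_
  induction hg using AddSubgroup.closure_induction with
  | mem g hg => exact hχ g hg
  | zero => exact _root_.map_one χ
  | add x y _ _ hx hy => rw [ofAdd_add, _root_.map_mul, hx, hy, mul_one]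
  | neg x _ hx => rw [ofAdd_neg, _root_.map_inv, hx, inv_one]

theorem exists_apply_ne_one_of_notMem [DiscreteTopology G] {H : AddSubgroup G} {a : G}
    (ha : a ∉ H) : ∃ χ ∈ annihilator (H : Set G), χ (ofAdd a) ≠ 1 := by
  obtain ⟨c, hc⟩ := CharacterModule.exists_character_apply_ne_zero_of_ne_zero
    ((QuotientAddGroup.eq_zero_iff a).not.2 ha)
  let f : G →+ AddCircle (1 : ℝ) :=
    AddCircle.ratToReal.comp ((AddMonoidHomClass.toAddMonoidHom c).comp (QuotientAddGroup.mk' H))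
  refine ⟨ofAddCircle f, fun h hh => (ofAddCircle_apply_eq_one_iff f h).2 ?_, ?_⟩
  · simp [f, (QuotientAddGroup.eq_zero_iff h).2 hh]
  · rw [Ne, ofAddCircle_apply_eq_one_iff]
    exact fun h0 => hc (AddCircle.ratToReal_injective (h0.trans (map_zero _).symm))

theorem annihilator_eq_singleton_one_iff [DiscreteTopology G] (H : AddSubgroup G) :
    annihilator (H : Set G) = {1} ↔ H = ⊤ := by
  refine ⟨fun h => ?_, ?_⟩
  · refine (AddSubgroup.eq_top_iff' H).2 fun a => by_contra fun ha => ?_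
    obtain ⟨χ, hχH, hχa⟩ := exists_apply_ne_one_of_notMem ha
    rw [h, mem_singleton_iff] at hχH
    exact hχa (hχH ▸ rfl)
  · rintro rfl
    refine eq_singleton_iff_unique_mem.2 ⟨one_mem_annihilator _, fun χ hχ => ?_⟩
    ext x
    exact congr_arg _ (hχ x.toAdd trivial)

theorem setOf_apply_eq_one_mem_nhds [DiscreteTopology G] {g : G} (hg : IsOfFinAddOrder g) :
    {χ : PontryaginDual (Multiplicative G) | χ (ofAdd g) = 1} ∈ 𝓝 1 := by
  have hcont : Continuous fun χ : PontryaginDual (Multiplicative G) => χ (ofAdd g) :=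
    (continuous_apply _).comp isInducing_coeFn.continuous
  filter_upwards [hcont.tendsto' 1 1 rfl
    (Circle.eventually_eq_one_of_pow_eq_one hg.addOrderOf_pos.ne')] with χ hχ
  apply hχ
  rw [← map_pow, ← ofAdd_nsmul, addOrderOf_nsmul_eq_zero, ofAdd_zero, _root_.map_one]

theorem annihilator_mem_nhds_one [DiscreteTopology G] (hG : IsAddTorsion G) {F : Set G}
    (hF : F.Finite) : annihilator F ∈ 𝓝 (1 : PontryaginDual (Multiplicative G)) := by
  filter_upwards [(biInter_mem hF).2 fun g _ => setOf_apply_eq_one_mem_nhds (hG g)]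
    with χ hχ g hg using mem_iInter₂.1 hχ g hg

theorem exists_finite_annihilator_subset [DiscreteTopology G]
    {U : Set (PontryaginDual (Multiplicative G))} (hU : U ∈ 𝓝 1) :
    ∃ F : Set G, F.Finite ∧ annihilator F ⊆ U := by
  rw [isInducing_coeFn.nhds_eq_comap, mem_comap] at hU
  obtain ⟨T, hT, hTU⟩ := hU
  rw [nhds_pi, Filter.mem_pi] at hT
  obtain ⟨I, hI, t, ht, hIT⟩ := hT
  refine ⟨toAdd '' I, hI.image _, fun χ hχ => hTU (hIT fun x hx => ?_)⟩
  rw [show χ x = 1 from hχ _ (mem_image_of_mem _ hx)]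
  exact mem_of_mem_nhds (ht x)

variable {φ : AddMonoid.End G}
  {ψ : PontryaginDual (Multiplicative G) → PontryaginDual (Multiplicative G)}

theorem iterate_apply_ofAdd (hψ : ∀ χ g, ψ χ (ofAdd g) = χ (ofAdd (φ g))) (n : ℕ)
    (χ : PontryaginDual (Multiplicative G)) (g : G) :
    ψ^[n] χ (ofAdd g) = χ (ofAdd ((φ ^ n) g)) := by
  induction n generalizing χ with
  | zero => rfl
  | succ n ih =>
    rw [Function.iterate_succ_apply, ih, hψ, pow_succ']
    rfl

theorem preimage_iterate_annihilator (hψ : ∀ χ g, ψ χ (ofAdd g) = χ (ofAdd (φ g))) (n : ℕ)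
    (F : Set G) : ψ^[n] ⁻¹' annihilator F = annihilator ((φ ^ n) '' F) := by
  ext χ
  simp [annihilator, iterate_apply_ofAdd hψ]

theorem iInter_preimage_iterate_annihilator (hψ : ∀ χ g, ψ χ (ofAdd g) = χ (ofAdd (φ g)))
    (S : AddSubgroup G) :
    ⋂ n : ℕ, ψ^[n] ⁻¹' annihilator (S : Set G) =
      annihilator ((⨆ n : ℕ, S.map (φ ^ n) : AddSubgroup G) : Set G) := by
  calc ⋂ n : ℕ, ψ^[n] ⁻¹' annihilator (S : Set G)
      _ = annihilator (⋃ n : ℕ, (φ ^ n) '' S) := by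
        simp only [preimage_iterate_annihilator hψ, annihilator_iUnion]
      _ = annihilator ((⨆ n : ℕ, S.map (φ ^ n) : AddSubgroup G) : Set G) := by
        rw [AddSubgroup.iSup_eq_closure, annihilator_closure]
        rfl

end PontryaginDual

open PontryaginDual

theorem stmt19 {G : Type*} [AddCommGroup G] [TopologicalSpace G] [DiscreteTopology G]
    (hG : AddMonoid.IsTorsion G) (φ : AddMonoid.End G)
    (ψ : PontryaginDual (Multiplicative G) → PontryaginDual (Multiplicative G))
    (hψ : ∀ (χ : PontryaginDual (Multiplicative G)) (g : G),
      ψ χ (Multiplicative.ofAdd g) = χ (Multiplicative.ofAdd (φ g))) :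
    (∃ S : AddSubgroup G, (S : Set G).Finite ∧ (⨆ n : ℕ, S.map (φ ^ n)) = ⊤) ↔
      ∃ U ∈ nhds (1 : PontryaginDual (Multiplicative G)),
        (⋂ n : ℕ, (ψ^[n]) ⁻¹' U) = {1} := by
  constructor
  · rintro ⟨S, hS, hS_top⟩
    refine ⟨annihilator (S : Set G), annihilator_mem_nhds_one hG hS, ?_⟩
    rw [iInter_preimage_iterate_annihilator hψ, annihilator_eq_singleton_one_iff]
    exact hS_top
  · rintro ⟨U, hU, hU_inter⟩
    obtain ⟨F, hF, hFU⟩ := exists_finite_annihilator_subset hU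
    refine ⟨AddSubgroup.closure F, hG.finite_closure_s19 hF, ?_⟩
    rw [← annihilator_eq_singleton_one_iff]
    refine Subset.antisymm ?_ (singleton_subset_iff.2 (one_mem_annihilator _))
    rw [← iInter_preimage_iterate_annihilator hψ, annihilator_closure, ← hU_inter]
    exact iInter_mono fun n => preimage_mono hFU
end
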